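/- Suppose char k does not divide the integer n ≥ 1. Let u_1, u_2 ∈ A be k-linear combinations of monomials of length exactly n, and let R be the k-span of all h^l_m(w) − w (w a monomial, 2 ≤ m ≤ len(w)). If η(u_1) − η(u_2) ∈ R, then u_1 − u_2 ∈ R. -/

import Mathlib

noncomputable section

abbrev FA (k : Type*) [Field k] (p : ℕ) := MonoidAlgebra k (FreeMonoid (Fin p))

def mon (k : Type*) [Field k] {p : ℕ} (l : List (Fin p)) : FA k p :=
  MonoidAlgebra.of k (FreeMonoid (Fin p)) (FreeMonoid.ofList l)

def etaRev (k : Type*) [Field k] {p : ℕ} : List (Fin p) → FA k p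
  | [] => 0
  | [a] => mon k [a]
  | a :: b :: l => mon k [a] * etaRev k (b :: l) - etaRev k (b :: l) * mon k [a]

def etaList (k : Type*) [Field k] {p : ℕ} (l : List (Fin p)) : FA k p :=
  etaRev k l.reverse

def etaLin (k : Type*) [Field k] (p : ℕ) : FA k p →ₗ[k] FA k p :=
  Finsupp.lift (FA k p) k (FreeMonoid (Fin p)) (fun w => etaList k (FreeMonoid.toList w)) ∘ₗ
    (MonoidAlgebra.coeffLinearEquiv k).toLinearMap

/-- The fold move `h^l_n` on a monomial (word). -/
def hl (k : Type*) [Field k] {p : ℕ} (n : ℕ) (l : List (Fin p)) : FA k p :=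
  if 2 ≤ n ∧ n ≤ l.length then
    ((-1 : k) ^ (n - 1)) •
      (mon k ((l.drop (n - 1)).take 1) * etaList k (l.take (n - 1)) * mon k (l.drop n))
  else mon k l

def hlLin (k : Type*) [Field k] (p n : ℕ) : FA k p →ₗ[k] FA k p :=
  Finsupp.lift (FA k p) k (FreeMonoid (Fin p)) (fun w => hl k n (FreeMonoid.toList w)) ∘ₗ
    (MonoidAlgebra.coeffLinearEquiv k).toLinearMap

/-- The span of the `H^l` relations `h^l_n(w) - w`. -/
def Rspan (k : Type*) [Field k] (p : ℕ) : Submodule k (FA k p) :=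
  Submodule.span k
    {x | ∃ (l : List (Fin p)) (n : ℕ), 2 ≤ n ∧ n ≤ l.length ∧ x = hl k n l - mon k l}

/-!
Every monomial `w` of length `n` satisfies `η(w) ≡ (-1)^(n+1) n · w (mod R)`. Writing
`w = t a` with `a` a generator, `η(w) = a η(t) - η(t) a`; the first term is `±h^l_n(w)`, hence
`≡ ±w`, and the second is `η(t)` (known by induction) multiplied on the right by `a`, which
preserves `R`. By linearity `η ≡ (-1)^(n+1) n` on the span of monomials of length `n`, and
this scalar is invertible when `char k ∤ n`.
-/

section

variable (k : Type*) [Field k] {p : ℕ}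

theorem mon_append (l₁ l₂ : List (Fin p)) : mon k (l₁ ++ l₂) = mon k l₁ * mon k l₂ :=
  map_mul (MonoidAlgebra.of k (FreeMonoid (Fin p))) (FreeMonoid.ofList l₁) (FreeMonoid.ofList l₂)

theorem mon_nil : mon k ([] : List (Fin p)) = 1 :=
  map_one (MonoidAlgebra.of k (FreeMonoid (Fin p)))

theorem etaLin_mon (l : List (Fin p)) : etaLin k p (mon k l) = etaList k l := by
  simp [etaLin, mon, MonoidAlgebra.coeffLinearEquiv]

theorem etaList_append_singleton {t : List (Fin p)} (ht : t ≠ []) (a : Fin p) :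
    etaList k (t ++ [a]) = mon k [a] * etaList k t - etaList k t * mon k [a] := by
  obtain ⟨b, s, hbs⟩ := List.exists_cons_of_ne_nil (List.reverse_ne_nil_iff.mpr ht)
  simp only [etaList, List.reverse_append, List.reverse_singleton, List.singleton_append, hbs]
  rfl

theorem hl_sub_mon_mem_Rspan {n : ℕ} {l : List (Fin p)} (h2 : 2 ≤ n) (hn : n ≤ l.length) :
    hl k n l - mon k l ∈ Rspan k p :=
  Submodule.subset_span ⟨l, n, h2, hn, rfl⟩

theorem hl_mul_mon {n : ℕ} {l : List (Fin p)} (h2 : 2 ≤ n) (hn : n ≤ l.length)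
    (l' : List (Fin p)) : hl k n l * mon k l' = hl k n (l ++ l') := by
  have h1 : n - 1 ≤ l.length := by omega
  have htake1 : (l.drop (n - 1) ++ l').take 1 = (l.drop (n - 1)).take 1 :=
    List.take_append_of_le_length (by simp only [List.length_drop]; omega)
  rw [hl, hl, if_pos ⟨h2, hn⟩, if_pos ⟨h2, by simp only [List.length_append]; omega⟩,
    List.drop_append_of_le_length h1, htake1, List.take_append_of_le_length h1,
    List.drop_append_of_le_length hn, mon_append, smul_mul_assoc, mul_assoc, mul_assoc]

theorem mul_mon_mem_Rspan {x : FA k p} (hx : x ∈ Rspan k p) (l' : List (Fin p)) :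
    x * mon k l' ∈ Rspan k p := by
  induction hx using Submodule.span_induction with
  | mem y hy =>
    obtain ⟨l, n, h2, hn, rfl⟩ := hy
    rw [sub_mul, hl_mul_mon k h2 hn, ← mon_append]
    exact hl_sub_mon_mem_Rspan k h2 (by simp only [List.length_append]; omega)
  | zero => rw [zero_mul]; exact zero_mem _
  | add y z _ _ hy hz => rw [add_mul]; exact add_mem hy hz
  | smul c y _ hy => rw [smul_mul_assoc]; exact Submodule.smul_mem _ _ hy

theorem hl_append_singleton {t : List (Fin p)} (ht : t ≠ []) (a : Fin p) :
    hl k (t.length + 1) (t ++ [a]) = ((-1 : k) ^ t.length) • (mon k [a] * etaList k t) := by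
  have ht1 : 1 ≤ t.length := List.length_pos_iff.mpr ht
  rw [hl, if_pos ⟨by omega, by simp⟩, Nat.add_sub_cancel, List.drop_left, List.take_left,
    List.drop_eq_nil_of_le (by simp), mon_nil, mul_one]
  rfl

theorem mon_mul_etaList_sub_mem_Rspan {t : List (Fin p)} (ht : t ≠ []) (a : Fin p) :
    mon k [a] * etaList k t - ((-1 : k) ^ t.length) • mon k (t ++ [a]) ∈ Rspan k p := by
  have hrel := Submodule.smul_mem _ ((-1 : k) ^ t.length)
    (hl_sub_mon_mem_Rspan k (l := t ++ [a]) (n := t.length + 1)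
      (by have := List.length_pos_iff.mpr ht; omega) (by simp))
  rwa [hl_append_singleton k ht, smul_sub, smul_smul, ← pow_add, ← two_mul, pow_mul,
    neg_one_sq, one_pow, one_smul] at hrel

theorem etaList_sub_smul_mon_mem_Rspan (l : List (Fin p)) :
    etaList k l - ((-1 : k) ^ (l.length + 1) * l.length) • mon k l ∈ Rspan k p := by
  induction l using List.reverseRecOn with
  | nil => simp [etaList, etaRev, zero_mem]
  | append_singleton t a ih =>
    rcases eq_or_ne t [] with rfl | ht
    · simp [etaList, etaRev, zero_mem]
    have key := sub_mem (mon_mul_etaList_sub_mem_Rspan k ht a) (mul_mon_mem_Rspan k ih [a])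
    rw [sub_mul, smul_mul_assoc, ← mon_append] at key
    convert key using 1
    rw [etaList_append_singleton k ht, List.length_append, List.length_singleton]
    push_cast
    module

theorem etaLin_sub_smul_mem_Rspan {n : ℕ} {u : FA k p}
    (hu : u ∈ Submodule.span k ((fun l : List (Fin p) => mon k l) '' {l | l.length = n})) :
    etaLin k p u - ((-1 : k) ^ (n + 1) * n) • u ∈ Rspan k p := by
  refine (Submodule.span_le (p := (Rspan k p).comap
    (etaLin k p - ((-1 : k) ^ (n + 1) * n) • LinearMap.id))).mpr ?_ hu
  rintro _ ⟨l, rfl, rfl⟩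
  simpa [etaLin_mon] using etaList_sub_smul_mon_mem_Rspan k l

end

theorem eta_injective_mod_R_general (k : Type*) [Field k] {p n : ℕ}
    (hchar : ¬ (ringChar k ∣ n)) (u₁ u₂ : FA k p)
    (h₁ : u₁ ∈ Submodule.span k ((fun l : List (Fin p) => mon k l) '' {l | l.length = n}))
    (h₂ : u₂ ∈ Submodule.span k ((fun l : List (Fin p) => mon k l) '' {l | l.length = n}))
    (h : etaLin k p u₁ - etaLin k p u₂ ∈ Rspan k p) :
    u₁ - u₂ ∈ Rspan k p := by
  set c : k := (-1 : k) ^ (n + 1) * n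
  have hc : c ≠ 0 :=
    mul_ne_zero (pow_ne_zero _ (neg_ne_zero.mpr one_ne_zero)) fun h0 => hchar (ringChar.dvd h0)
  have hmem := add_mem (sub_mem h (etaLin_sub_smul_mem_Rspan k h₁)) (etaLin_sub_smul_mem_Rspan k h₂)
  rw [← Submodule.smul_mem_iff _ hc]
  convert hmem using 1
  module

/-- If char k does not divide n and u₁, u₂ are linear combinations of monomials of
length n, then η(u₁) ≡ η(u₂) mod R implies u₁ ≡ u₂ mod R. -/
theorem eta_injective_mod_R (k : Type*) [Field k] (hk : ringChar k ≠ 2) {p n : ℕ}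
    (hn : 1 ≤ n) (hchar : ¬ (ringChar k ∣ n)) (u₁ u₂ : FA k p)
    (h₁ : u₁ ∈ Submodule.span k ((fun l : List (Fin p) => mon k l) '' {l | l.length = n}))
    (h₂ : u₂ ∈ Submodule.span k ((fun l : List (Fin p) => mon k l) '' {l | l.length = n}))
    (h : etaLin k p u₁ - etaLin k p u₂ ∈ Rspan k p) :
    u₁ - u₂ ∈ Rspan k p :=
  eta_injective_mod_R_general k hchar u₁ u₂ h₁ h₂ h
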